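/- arXiv:1812.03276 — 4 statements merged into one kernel-verified Lean document; each statement's English description precedes it below -/
import Mathlib

section
/- Let G be a Lie group with multiplication m, 𝔤 its Lie algebra, and Z: G → 𝔤 a smooth 1-cocycle for the adjoint representation (Z(g₁g₂) = Ad_{g₁}Z(g₂) + Z(g₁)). Let F_ε be the flow of the vector field →Z(g) = dR_g(Z(g)) on G. Then whenever defined, each F_ε is a group homomorphism: F_ε(g₁g₂) = F_ε(g₁)F_ε(g₂). -/
/-
The right-translated field `→Z g = dR_g (Z g)` is compatible with the multiplication:
`dm_(a,b) (→Z a, →Z b) = →Z (a * b)`. Indeed, by the chain rule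
`dm_(a,b) (dR_a u, dR_b v) = dR_(ab) (u + Ad_a v)`, and `Z a + Ad_a (Z b) = Z (a * b)` is the
cocycle identity. Hence `t ↦ F_t g₁ * F_t g₂` is an integral curve of `→Z`; it starts at `g₁ * g₂`,
as does `t ↦ F_t (g₁ * g₂)`, and integral curves of the `C¹` field `→Z` are unique.
-/

open Manifold

variable {E F : Type*} [NormedAddCommGroup E] [NormedSpace ℝ E]
  [NormedAddCommGroup F] [NormedSpace ℝ F]
  {G : Type*} [TopologicalSpace G] [ChartedSpace E G] [Group G] [LieGroup 𝓘(ℝ, E) (⊤ : ℕ∞) G]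
  {H : Type*} [TopologicalSpace H] [ChartedSpace F H] [Group H] [LieGroup 𝓘(ℝ, F) (⊤ : ℕ∞) H]

/-- The adjoint representation of `G` on `𝔤 = T₁G ≃ E`. -/
noncomputable def Ad (g : G) : E →L[ℝ] E :=
  mfderiv 𝓘(ℝ, E) 𝓘(ℝ, E) (fun x => g * x * g⁻¹) (1 : G)

section Translations

variable {𝕜 : Type*} [NontriviallyNormedField 𝕜] {E : Type*} [NormedAddCommGroup E]
  [NormedSpace 𝕜 E] {H : Type*} [TopologicalSpace H] {I : ModelWithCorners 𝕜 E H}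
  {G : Type*} [TopologicalSpace G] [ChartedSpace H G] [Group G]

variable (I) in
noncomputable def rightTranslatedVectorField (Z : G → E) (g : G) : TangentSpace I g :=
  mfderiv I I (· * g) 1 (Z g)

section ContMDiffMul

variable [ContMDiffMul I 1 G]

theorem mfderiv_mul_right_apply_mfderiv_mul_right (a b : G) (v : TangentSpace I (1 : G)) :
    mfderiv I I (· * b) a (mfderiv I I (· * a) 1 v) = mfderiv I I (· * (a * b)) 1 v := by
  rw [← mfderiv_comp_apply_of_eq _ mdifferentiableAt_mul_right mdifferentiableAt_mul_right
    (one_mul a)]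
  congr 2
  funext x
  exact mul_assoc x a b

theorem mfderiv_mul_left_apply_mfderiv_mul_right (a b : G) (v : TangentSpace I (1 : G)) :
    mfderiv I I (a * ·) b (mfderiv I I (· * b) 1 v) =
      mfderiv I I (· * (a * b)) 1 (mfderiv I I (fun x => a * x * a⁻¹) 1 v) := by
  have hconj : MDifferentiableAt I I (fun x : G => a * x * a⁻¹) 1 :=
    mdifferentiableAt_mul_right.comp _ mdifferentiableAt_mul_left
  have hfun : (a * ·) ∘ (· * b) = (· * (a * b)) ∘ fun x => a * x * a⁻¹ := by
    funext x
    simp only [Function.comp_apply]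
    group
  have h₁ := mfderiv_comp_apply_of_eq 1 (mdifferentiableAt_mul_left (a := a))
    (mdifferentiableAt_mul_right (a := b)) (one_mul b) v
  have h₂ := mfderiv_comp_apply_of_eq (y := 1) 1 (mdifferentiableAt_mul_right (a := a * b)) hconj
    (by group) v
  rw [hfun] at h₁
  exact h₁.symm.trans h₂

theorem HasMFDerivAt.mul_of_contMDiffMul {E' : Type*} [NormedAddCommGroup E'] [NormedSpace 𝕜 E']
    {H' : Type*} [TopologicalSpace H'] {I' : ModelWithCorners 𝕜 E' H'} {M : Type*}
    [TopologicalSpace M] [ChartedSpace H' M] {f₁ f₂ : M → G} {x : M}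
    {df₁ : TangentSpace I' x →L[𝕜] TangentSpace I (f₁ x)}
    {df₂ : TangentSpace I' x →L[𝕜] TangentSpace I (f₂ x)}
    (hf₁ : HasMFDerivAt I' I f₁ x df₁) (hf₂ : HasMFDerivAt I' I f₂ x df₂) :
    HasMFDerivAt I' I (fun y => f₁ y * f₂ y) x
      ((mfderiv I I (· * f₂ x) (f₁ x)).comp df₁ + (mfderiv I I (f₁ x * ·) (f₂ x)).comp df₂) := by
  have hmul : MDifferentiableAt (I.prod I) I (fun p : G × G => p.1 * p.2) (f₁ x, f₂ x) :=
    (contMDiff_mul I 1).mdifferentiableAt one_ne_zero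
  refine (hmul.hasMFDerivAt.comp x (hf₁.prodMk hf₂)).congr_mfderiv ?_
  ext v
  exact mfderiv_prod_eq_add_apply hmul

theorem HasMFDerivAt.curve_mul {γ₁ γ₂ : 𝕜 → G} {t : 𝕜} {v₁ v₂ : E}
    (h₁ : HasMFDerivAt 𝓘(𝕜, 𝕜) I γ₁ t ((1 : 𝕜 →L[𝕜] 𝕜).smulRight v₁))
    (h₂ : HasMFDerivAt 𝓘(𝕜, 𝕜) I γ₂ t ((1 : 𝕜 →L[𝕜] 𝕜).smulRight v₂)) :
    HasMFDerivAt 𝓘(𝕜, 𝕜) I (fun s => γ₁ s * γ₂ s) t ((1 : 𝕜 →L[𝕜] 𝕜).smulRight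
      (mfderiv I I (· * γ₂ t) (γ₁ t) v₁ + mfderiv I I (γ₁ t * ·) (γ₂ t) v₂)) := by
  refine (h₁.mul_of_contMDiffMul h₂).congr_mfderiv ?_
  ext1
  show mfderiv I I (· * γ₂ t) (γ₁ t) ((1 : 𝕜) • v₁) + mfderiv I I (γ₁ t * ·) (γ₂ t) ((1 : 𝕜) • v₂)
    = (1 : 𝕜) • (mfderiv I I (· * γ₂ t) (γ₁ t) v₁ + mfderiv I I (γ₁ t * ·) (γ₂ t) v₂)
  rw [one_smul, one_smul, one_smul]

end ContMDiffMul

theorem contMDiff_rightTranslatedVectorField [ContMDiffMul I 2 G] {Z : G → E}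
    (hZ : ContMDiff I 𝓘(𝕜, E) 1 Z) :
    ContMDiff I I.tangent 1
      (fun g => (⟨g, rightTranslatedVectorField I Z g⟩ : TangentBundle I G)) := by
  intro g₀
  rw [Bundle.contMDiffAt_section]
  have hsm := ContMDiffAt.mfderiv_apply (x₀ := g₀) (fun (g x : G) => x * g) (fun _ => (1 : G)) id Z
    ((contMDiff_mul I 2).comp (contMDiff_snd.prodMk contMDiff_fst)).contMDiffAt
    contMDiffAt_const contMDiffAt_id (hZ g₀) le_rfl
  apply hsm.congr_of_eventuallyEq
  filter_upwards [(chartAt H g₀).open_source.mem_nhds (mem_chart_source H g₀)] with g hg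
  erw [inTangentCoordinates_eq]
  rotate_left
  · exact mem_chart_source H _
  · simpa only [id_eq, one_mul] using hg
  simp only [id_eq, one_mul, ContinuousLinearMap.comp_apply]
  change _ = (tangentBundleCore I G).coordChange (achart H g) (achart H g₀) g
    (mfderiv I I (· * g) 1 ((tangentBundleCore I G).coordChange (achart H 1) (achart H 1) 1 (Z g)))
  rw [(tangentBundleCore I G).coordChange_self _ _ (mem_chart_source H 1)]
  rfl

end Translations

section Cocycle

variable {E : Type*} [NormedAddCommGroup E] [NormedSpace ℝ E] {G : Type*} [TopologicalSpace G]
  [ChartedSpace E G] [Group G] [ContMDiffMul 𝓘(ℝ, E) 1 G] {Z : G → E}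

theorem rightTranslatedVectorField_mul (hZ : ∀ a b : G, Z (a * b) = Ad a (Z b) + Z a) (a b : G) :
    rightTranslatedVectorField 𝓘(ℝ, E) Z (a * b) =
      mfderiv 𝓘(ℝ, E) 𝓘(ℝ, E) (· * b) a (rightTranslatedVectorField 𝓘(ℝ, E) Z a) +
        mfderiv 𝓘(ℝ, E) 𝓘(ℝ, E) (a * ·) b (rightTranslatedVectorField 𝓘(ℝ, E) Z b) := by
  erw [mfderiv_mul_right_apply_mfderiv_mul_right, mfderiv_mul_left_apply_mfderiv_mul_right]
  rw [rightTranslatedVectorField, hZ, add_comm]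
  exact map_add _ _ _

theorem IsMIntegralCurve.mul_of_cocycle (hZ : ∀ a b : G, Z (a * b) = Ad a (Z b) + Z a)
    {γ₁ γ₂ : ℝ → G} (h₁ : IsMIntegralCurve γ₁ (rightTranslatedVectorField 𝓘(ℝ, E) Z))
    (h₂ : IsMIntegralCurve γ₂ (rightTranslatedVectorField 𝓘(ℝ, E) Z)) :
    IsMIntegralCurve (fun t => γ₁ t * γ₂ t) (rightTranslatedVectorField 𝓘(ℝ, E) Z) := by
  intro t
  rw [rightTranslatedVectorField_mul hZ]
  exact (h₁ t).curve_mul (h₂ t)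

end Cocycle

/-- let `Z : G → 𝔤` be a smooth 1-cocycle for the adjoint
representation (`Z(g₁g₂) = Ad_{g₁}Z(g₂) + Z(g₁)`) and let `F_ε` be the flow of
the right-translated vector field `→Z(g) = dR_g(Z(g))` (so `F₀ = id` and
`ε ↦ F_ε(g)` is an integral curve of `→Z` for every `g`). Then each `F_ε` is a
group homomorphism: `F_ε(g₁g₂) = F_ε(g₁)F_ε(g₂)`. -/
theorem flow_of_cocycle_is_homomorphism (Z : G → E)
    (hZsmooth : ContMDiff 𝓘(ℝ, E) 𝓘(ℝ, E) (⊤ : ℕ∞) Z)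
    (hZcoc : ∀ g₁ g₂ : G, Z (g₁ * g₂) = Ad g₁ (Z g₂) + Z g₁)
    (Flow : ℝ → G → G) (hF0 : ∀ g : G, Flow 0 g = g)
    (hflow : ∀ (g : G) (ε : ℝ),
      HasMFDerivAt 𝓘(ℝ, ℝ) 𝓘(ℝ, E) (fun t => Flow t g) ε
        ((1 : ℝ →L[ℝ] ℝ).smulRight
          (mfderiv 𝓘(ℝ, E) 𝓘(ℝ, E) (fun x => x * Flow ε g) (1 : G)
            (Z (Flow ε g))))) :
    ∀ (ε : ℝ) (g₁ g₂ : G), Flow ε (g₁ * g₂) = Flow ε g₁ * Flow ε g₂ := by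
  intro ε g₁ g₂
  -- with these two, instance search finds the `T2Space G` that uniqueness of integral curves needs
  have : T1Space G := ChartedSpace.t1Space E G
  have : IsTopologicalGroup G := topologicalGroup_of_lieGroup 𝓘(ℝ, E) ((⊤ : ℕ∞) : WithTop ℕ∞)
  have hcurve : ∀ g, IsMIntegralCurve (Flow · g) (rightTranslatedVectorField 𝓘(ℝ, E) Z) :=
    fun g t => hflow g t
  have hsame : (Flow · (g₁ * g₂)) = fun t => Flow t g₁ * Flow t g₂ :=
    isMIntegralCurve_eq_of_contMDiff (t₀ := 0) (fun _ => BoundarylessManifold.isInteriorPoint)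
      (contMDiff_rightTranslatedVectorField (hZsmooth.of_le (by simp))) (hcurve _)
      ((hcurve g₁).mul_of_cocycle hZcoc (hcurve g₂)) (by simp [hF0])
  exact congrFun hsame ε
end

section
/- Let φ_ε: H → G be a smooth deformation of φ that is weakly trivial, i.e. φ_ε = F_ε ∘ φ for a smooth family of Lie group automorphisms F_ε of G with F₀ = Id_G. Then the deformation cocycle satisfies X_ε = φ_ε* Z_ε, where Z_ε: G → 𝔤 is the smooth family of 1-cocycles Z_ε(g) = dR_{g⁻¹}(→Z_ε(g)) with →Z_ε = (d/dε F_ε) ∘ F_ε⁻¹, and φ_ε* denotes pullback of cochains along φ_ε. In particular [X_ε] lies in the image of φ_ε*: H¹(G,𝔤) → H¹_{φ_ε}(H,𝔤). -/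
open Manifold

variable {E F : Type*} [NormedAddCommGroup E] [NormedSpace ℝ E]
  [NormedAddCommGroup F] [NormedSpace ℝ F]
  {G : Type*} [TopologicalSpace G] [ChartedSpace E G] [Group G] [LieGroup 𝓘(ℝ, E) (⊤ : ℕ∞) G]
  {H : Type*} [TopologicalSpace H] [ChartedSpace F H] [Group H] [LieGroup 𝓘(ℝ, F) (⊤ : ℕ∞) H]

set_option linter.unusedSectionVars false

lemma comp_deriv_aux {f g : G → G} {x y : G} (hy : f x = y)
    (hg : MDifferentiableAt 𝓘(ℝ, E) 𝓘(ℝ, E) g y)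
    (hf : MDifferentiableAt 𝓘(ℝ, E) 𝓘(ℝ, E) f x) (v : E) :
    mfderiv 𝓘(ℝ, E) 𝓘(ℝ, E) g y (mfderiv 𝓘(ℝ, E) 𝓘(ℝ, E) f x v)
      = mfderiv 𝓘(ℝ, E) 𝓘(ℝ, E) (fun a => g (f a)) x v := by
  subst hy
  rw [show (fun a => g (f a)) = g ∘ f from rfl, mfderiv_comp x hg hf]
  rfl

lemma mul_partial_aux (a b : G) (v w : E) :
    mfderiv (𝓘(ℝ, E).prod 𝓘(ℝ, E)) 𝓘(ℝ, E) (fun p : G × G => p.1 * p.2) (a, b) (v, w)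
      = mfderiv 𝓘(ℝ, E) 𝓘(ℝ, E) (fun x => x * b) a v
        + mfderiv 𝓘(ℝ, E) 𝓘(ℝ, E) (fun y => a * y) b w := by
  have hmul : MDifferentiableAt (𝓘(ℝ, E).prod 𝓘(ℝ, E)) 𝓘(ℝ, E)
      (fun p : G × G => p.1 * p.2) (a, b) :=
    (contMDiff_mul 𝓘(ℝ, E) (⊤ : ℕ∞)).mdifferentiableAt (by simp)
  have hl : MDifferentiableAt 𝓘(ℝ, E) (𝓘(ℝ, E).prod 𝓘(ℝ, E)) (fun x : G => (x, b)) a :=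
    mdifferentiableAt_id.prodMk mdifferentiableAt_const
  have hr : MDifferentiableAt 𝓘(ℝ, E) (𝓘(ℝ, E).prod 𝓘(ℝ, E)) (fun y : G => (a, y)) b :=
    mdifferentiableAt_const.prodMk mdifferentiableAt_id
  have h1 : mfderiv 𝓘(ℝ, E) 𝓘(ℝ, E) (fun x => x * b) a v
      = mfderiv (𝓘(ℝ, E).prod 𝓘(ℝ, E)) 𝓘(ℝ, E) (fun p : G × G => p.1 * p.2) (a, b) (v, 0) := by
    rw [show (fun x : G => x * b) = (fun p : G × G => p.1 * p.2) ∘ (fun x : G => (x, b)) from rfl,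
      mfderiv_comp a hmul hl, mfderiv_prod_left]
    rfl
  have h2 : mfderiv 𝓘(ℝ, E) 𝓘(ℝ, E) (fun y => a * y) b w
      = mfderiv (𝓘(ℝ, E).prod 𝓘(ℝ, E)) 𝓘(ℝ, E) (fun p : G × G => p.1 * p.2) (a, b) (0, w) := by
    rw [show (fun y : G => a * y) = (fun p : G × G => p.1 * p.2) ∘ (fun y : G => (a, y)) from rfl,
      mfderiv_comp b hmul hr, mfderiv_prod_right]
    rfl
  rw [h1, h2]
  have hadd := map_add (mfderiv (𝓘(ℝ, E).prod 𝓘(ℝ, E)) 𝓘(ℝ, E) (fun p : G × G => p.1 * p.2) (a, b))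
    ((v, 0) : E × E) ((0, w) : E × E)
  simp only [Prod.mk_add_mk, add_zero, zero_add] at hadd
  exact hadd

lemma leibniz_aux {f g : ℝ → G} {t : ℝ} {a b : G} (ha : f t = a) (hb : g t = b)
    (hf : MDifferentiableAt 𝓘(ℝ, ℝ) 𝓘(ℝ, E) f t)
    (hg : MDifferentiableAt 𝓘(ℝ, ℝ) 𝓘(ℝ, E) g t) :
    mfderiv 𝓘(ℝ, ℝ) 𝓘(ℝ, E) (fun s => f s * g s) t (1 : ℝ)
      = mfderiv 𝓘(ℝ, E) 𝓘(ℝ, E) (fun y => y * b) a (mfderiv 𝓘(ℝ, ℝ) 𝓘(ℝ, E) f t (1 : ℝ))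
        + mfderiv 𝓘(ℝ, E) 𝓘(ℝ, E) (fun y => a * y) b
            (mfderiv 𝓘(ℝ, ℝ) 𝓘(ℝ, E) g t (1 : ℝ)) := by
  subst ha hb
  have hmul : MDifferentiableAt (𝓘(ℝ, E).prod 𝓘(ℝ, E)) 𝓘(ℝ, E)
      (fun p : G × G => p.1 * p.2) (f t, g t) :=
    (contMDiff_mul 𝓘(ℝ, E) (⊤ : ℕ∞)).mdifferentiableAt (by simp)
  have hpair : MDifferentiableAt 𝓘(ℝ, ℝ) (𝓘(ℝ, E).prod 𝓘(ℝ, E)) (fun s => (f s, g s)) t :=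
    hf.prodMk hg
  rw [show (fun s => f s * g s)
      = (fun p : G × G => p.1 * p.2) ∘ (fun s => (f s, g s)) from rfl,
    mfderiv_comp t hmul hpair]
  have h : mfderiv 𝓘(ℝ, ℝ) (𝓘(ℝ, E).prod 𝓘(ℝ, E)) (fun s => (f s, g s)) t
      = (mfderiv 𝓘(ℝ, ℝ) 𝓘(ℝ, E) f t).prod (mfderiv 𝓘(ℝ, ℝ) 𝓘(ℝ, E) g t) :=
    hf.mfderiv_prod hg
  rw [h]
  exact mul_partial_aux _ _ _ _

/-- if a smooth deformation `φ_ε = F_ε ∘ φ₀` of `φ₀ : H → G` is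
weakly trivial (with `F_ε` a smooth family of Lie group automorphisms of `G`,
`F₀ = Id`, and `Finv ε` the inverse of `F ε`), then with
`Z_ε(x) = dR_{x⁻¹}((d/dε F_ε)(F_ε⁻¹(x)))`, each `Z_ε` is a 1-cocycle of `G` with
values in `𝔤` for the adjoint representation, and the deformation cocycle
satisfies `X_ε = φ_ε* Z_ε`; in particular `[X_ε]` lies in the image of
`φ_ε* : H¹(G,𝔤) → H¹_{φ_ε}(H,𝔤)`. -/
theorem weakly_trivial_deformation_pullback_cocycle
    (Flow : ℝ → G → G) (Finv : ℝ → G → G) (φ₀ : H → G)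
    (hFsmooth : ContMDiff (𝓘(ℝ, ℝ).prod 𝓘(ℝ, E)) 𝓘(ℝ, E) (⊤ : ℕ∞)
      fun p : ℝ × G => Flow p.1 p.2)
    (hFhom : ∀ (ε : ℝ) (x y : G), Flow ε (x * y) = Flow ε x * Flow ε y)
    (hF0 : ∀ x : G, Flow 0 x = x)
    (hFinv : ∀ (ε : ℝ) (x : G), Flow ε (Finv ε x) = x ∧ Finv ε (Flow ε x) = x)
    (hφ₀hom : ∀ h₁ h₂ : H, φ₀ (h₁ * h₂) = φ₀ h₁ * φ₀ h₂)
    (hφ₀smooth : ContMDiff 𝓘(ℝ, F) 𝓘(ℝ, E) (⊤ : ℕ∞) φ₀)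
    (Z : ℝ → G → E)
    (hZ : ∀ (ε : ℝ) (x : G), Z ε x =
      mfderiv 𝓘(ℝ, E) 𝓘(ℝ, E) (fun a => a * x⁻¹) x
        (mfderiv 𝓘(ℝ, ℝ) 𝓘(ℝ, E) (fun t => Flow t (Finv ε x)) ε (1 : ℝ)))
    (X : ℝ → H → E)
    (hX : ∀ (ε : ℝ) (h : H), X ε h =
      mfderiv 𝓘(ℝ, E) 𝓘(ℝ, E) (fun x => x * (Flow ε (φ₀ h))⁻¹) (Flow ε (φ₀ h))
        (mfderiv 𝓘(ℝ, ℝ) 𝓘(ℝ, E) (fun t => Flow t (φ₀ h)) ε (1 : ℝ))) :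
    (∀ (ε : ℝ) (x₁ x₂ : G), Z ε (x₁ * x₂) = Ad x₁ (Z ε x₂) + Z ε x₁) ∧
      ∀ (ε : ℝ) (h : H), X ε h = Z ε (Flow ε (φ₀ h)) := by
  have hcurve : ∀ c : G, ContMDiff 𝓘(ℝ, ℝ) 𝓘(ℝ, E) (⊤ : ℕ∞) (fun t => Flow t c) := fun c =>
    hFsmooth.comp (contMDiff_id.prodMk contMDiff_const)
  have hRd : ∀ (c x : G), MDifferentiableAt 𝓘(ℝ, E) 𝓘(ℝ, E) (fun a : G => a * c) x :=
    fun c x => mdifferentiableAt_mul_right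
  have hLd : ∀ (c x : G), MDifferentiableAt 𝓘(ℝ, E) 𝓘(ℝ, E) (fun a : G => c * a) x :=
    fun c x => mdifferentiableAt_mul_left
  constructor
  · intro ε x₁ x₂
    have e₁ : Flow ε (Finv ε x₁) = x₁ := (hFinv ε x₁).1
    have e₂ : Flow ε (Finv ε x₂) = x₂ := (hFinv ε x₂).1
    have einv : Finv ε (x₁ * x₂) = Finv ε x₁ * Finv ε x₂ := by
      conv_lhs => rw [← e₁, ← e₂, ← hFhom]
      exact (hFinv ε (Finv ε x₁ * Finv ε x₂)).2
    have hγ₁d : MDifferentiableAt 𝓘(ℝ, ℝ) 𝓘(ℝ, E) (fun t => Flow t (Finv ε x₁)) ε :=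
      (hcurve (Finv ε x₁)).mdifferentiableAt (by simp)
    have hγ₂d : MDifferentiableAt 𝓘(ℝ, ℝ) 𝓘(ℝ, E) (fun t => Flow t (Finv ε x₂)) ε :=
      (hcurve (Finv ε x₂)).mdifferentiableAt (by simp)
    have hcurve_eq : (fun t => Flow t (Finv ε x₁ * Finv ε x₂))
        = fun t => Flow t (Finv ε x₁) * Flow t (Finv ε x₂) := by
      funext t; rw [hFhom]
    have hlb : mfderiv 𝓘(ℝ, ℝ) 𝓘(ℝ, E)
        (fun t => Flow t (Finv ε x₁) * Flow t (Finv ε x₂)) ε (1 : ℝ)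
        = mfderiv 𝓘(ℝ, E) 𝓘(ℝ, E) (fun y => y * x₂) x₁
            (mfderiv 𝓘(ℝ, ℝ) 𝓘(ℝ, E) (fun t => Flow t (Finv ε x₁)) ε (1 : ℝ))
          + mfderiv 𝓘(ℝ, E) 𝓘(ℝ, E) (fun y => x₁ * y) x₂
            (mfderiv 𝓘(ℝ, ℝ) 𝓘(ℝ, E) (fun t => Flow t (Finv ε x₂)) ε (1 : ℝ)) :=
      leibniz_aux (f := fun t => Flow t (Finv ε x₁)) (g := fun t => Flow t (Finv ε x₂))
        e₁ e₂ hγ₁d hγ₂d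
    rw [hZ ε (x₁ * x₂), einv, hFhom ε (Finv ε x₁) (Finv ε x₂), hcurve_eq, hlb, map_add]
    have term1 : mfderiv 𝓘(ℝ, E) 𝓘(ℝ, E) (fun a => a * (x₁ * x₂)⁻¹) (x₁ * x₂)
        (mfderiv 𝓘(ℝ, E) 𝓘(ℝ, E) (fun y => y * x₂) x₁
          (mfderiv 𝓘(ℝ, ℝ) 𝓘(ℝ, E) (fun t => Flow t (Finv ε x₁)) ε (1 : ℝ)))
        = Z ε x₁ := by
      rw [comp_deriv_aux (f := fun y : G => y * x₂) (g := fun a : G => a * (x₁ * x₂)⁻¹) (x := x₁)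
          (v := mfderiv 𝓘(ℝ, ℝ) 𝓘(ℝ, E) (fun t => Flow t (Finv ε x₁)) ε (1 : ℝ))
          rfl (hRd _ _) (hRd _ _),
        show (fun a : G => (fun a : G => a * (x₁ * x₂)⁻¹) ((fun y : G => y * x₂) a))
            = fun a : G => a * x₁⁻¹ from funext fun a => by group,
        hZ ε x₁]
      rfl
    have hconjd : MDifferentiableAt 𝓘(ℝ, E) 𝓘(ℝ, E) (fun x : G => x₁ * x * x₁⁻¹) (1 : G) :=
      MDifferentiableAt.comp (1 : G) (hRd x₁⁻¹ (x₁ * 1)) (hLd x₁ 1)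
    have hx : (fun a : G => a * x₂⁻¹) x₂ = (1 : G) := by group
    have term2 : mfderiv 𝓘(ℝ, E) 𝓘(ℝ, E) (fun a => a * (x₁ * x₂)⁻¹) (x₁ * x₂)
        (mfderiv 𝓘(ℝ, E) 𝓘(ℝ, E) (fun y => x₁ * y) x₂
          (mfderiv 𝓘(ℝ, ℝ) 𝓘(ℝ, E) (fun t => Flow t (Finv ε x₂)) ε (1 : ℝ)))
        = Ad x₁ (Z ε x₂) := by
      rw [comp_deriv_aux (f := fun y : G => x₁ * y) (g := fun a : G => a * (x₁ * x₂)⁻¹) (x := x₂)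
          (v := mfderiv 𝓘(ℝ, ℝ) 𝓘(ℝ, E) (fun t => Flow t (Finv ε x₂)) ε (1 : ℝ))
          rfl (hRd _ _) (hLd _ _),
        show (fun a : G => (fun a : G => a * (x₁ * x₂)⁻¹) ((fun y : G => x₁ * y) a))
            = (fun a : G => (fun x : G => x₁ * x * x₁⁻¹) ((fun a : G => a * x₂⁻¹) a))
          from funext fun a => by group,
        hZ ε x₂]
      exact (comp_deriv_aux (f := fun a : G => a * x₂⁻¹) (g := fun x : G => x₁ * x * x₁⁻¹)
        (y := (1 : G)) hx hconjd (hRd _ _) _).symm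
    rw [term1, term2]
    exact add_comm _ _
  · intro ε h
    rw [hX, hZ, (hFinv ε (φ₀ h)).2]
end

section
/- Let (H_ε, ι_ε) be a smooth deformation of an embedded Lie subgroup ι: H ↪ G. For each λ, the map \bar{X}_λ(h) = dR_{ι_λ(h)⁻¹}(d/dε|_{ε=λ} ι_ε(h)) mod 𝔥_λ is a 1-cocycle in C¹_{ι_λ}(H_λ, 𝔤/𝔥_λ): \bar{X}_λ(m_λ(h₁,h₂)) = \overline{Ad}_{ι_λ(h₁)} \bar{X}_λ(h₂) + \bar{X}_λ(h₁), where 𝔥_λ = dι_λ(Lie(H_λ)) and \overline{Ad} is the induced action on 𝔤/𝔥_λ. -/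
/-!
Differentiate `ι_ε(m_ε(h₁, h₂)) = ι_ε(h₁) ι_ε(h₂)` at `ε = λ` and right-trivialize at
`ι_λ(h₁h₂)`. By the product rule in `G` the right side gives `X(h₁) + Ad_{ι_λ(h₁)} X(h₂)`. On the
left, the chain rule gives `X(h₁h₂)` plus the variation `dι_λ(ṁ)` of `ι_λ` along
`ṁ = ∂_ε m_ε(h₁, h₂)`; because `ι_λ` is a homomorphism, right translation by `ι_λ(h₁h₂)⁻¹`
turns this into `dι_λ` at `e` applied to a right translate of `ṁ`, which lies in `𝔥_λ`.
-/

open Manifold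

variable {E F : Type*} [NormedAddCommGroup E] [NormedSpace ℝ E]
  [NormedAddCommGroup F] [NormedSpace ℝ F]
  {G : Type*} [TopologicalSpace G] [ChartedSpace E G] [Group G] [LieGroup 𝓘(ℝ, E) (⊤ : ℕ∞) G]
  {H : Type*} [TopologicalSpace H] [ChartedSpace F H]
  [IsManifold 𝓘(ℝ, F) (⊤ : ℕ∞) H]

section ChainRule

variable {𝕜 : Type*} [NontriviallyNormedField 𝕜]
  {E₀ : Type*} [NormedAddCommGroup E₀] [NormedSpace 𝕜 E₀]
  {H₀ : Type*} [TopologicalSpace H₀] {I₀ : ModelWithCorners 𝕜 E₀ H₀}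
  {M₀ : Type*} [TopologicalSpace M₀] [ChartedSpace H₀ M₀]
  {E₁ : Type*} [NormedAddCommGroup E₁] [NormedSpace 𝕜 E₁]
  {H₁ : Type*} [TopologicalSpace H₁] {I₁ : ModelWithCorners 𝕜 E₁ H₁}
  {M₁ : Type*} [TopologicalSpace M₁] [ChartedSpace H₁ M₁]
  {E₂ : Type*} [NormedAddCommGroup E₂] [NormedSpace 𝕜 E₂]
  {H₂ : Type*} [TopologicalSpace H₂] {I₂ : ModelWithCorners 𝕜 E₂ H₂}
  {M₂ : Type*} [TopologicalSpace M₂] [ChartedSpace H₂ M₂]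
  {E₃ : Type*} [NormedAddCommGroup E₃] [NormedSpace 𝕜 E₃]
  {H₃ : Type*} [TopologicalSpace H₃] {I₃ : ModelWithCorners 𝕜 E₃ H₃}
  {M₃ : Type*} [TopologicalSpace M₃] [ChartedSpace H₃ M₃]

theorem mfderiv_comp_prodMk_apply {Φ : M₁ × M₂ → M₃} {f : M₀ → M₁} {g : M₀ → M₂} {x : M₀}
    (hΦ : MDifferentiableAt (I₁.prod I₂) I₃ Φ (f x, g x))
    (hf : MDifferentiableAt I₀ I₁ f x) (hg : MDifferentiableAt I₀ I₂ g x)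
    (v : TangentSpace I₀ x) :
    mfderiv I₀ I₃ (fun y => Φ (f y, g y)) x v =
      mfderiv I₁ I₃ (fun z => Φ (z, g x)) (f x) (mfderiv I₀ I₁ f x v) +
        mfderiv I₂ I₃ (fun z => Φ (f x, z)) (g x) (mfderiv I₀ I₂ g x v) := by
  have hcomp := mfderiv_comp_apply x hΦ (hf.prodMk hg) v
  rw [hf.mfderiv_prod hg] at hcomp
  exact hcomp.trans (mfderiv_prod_eq_add_apply hΦ)

end ChainRule

section RightTrivialization

variable {𝕜 : Type*} [NontriviallyNormedField 𝕜]
  {E₀ : Type*} [NormedAddCommGroup E₀] [NormedSpace 𝕜 E₀]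
  {H₀ : Type*} [TopologicalSpace H₀] (I : ModelWithCorners 𝕜 E₀ H₀)
  {K : Type*} [TopologicalSpace K] [ChartedSpace H₀ K] [Group K]

/-- `dR_{g⁻¹}` at `g`, as a map `T_g K → T_1 K`; both are modelled on `E₀`. -/
noncomputable def rightTrivialization (g : K) : E₀ →L[𝕜] E₀ :=
  mfderiv I I (· * g⁻¹) g

variable {I} [ContMDiffMul I 1 K]

theorem rightTrivialization_mfderiv_monoidHom
    {E₁ : Type*} [NormedAddCommGroup E₁] [NormedSpace 𝕜 E₁]
    {H₁ : Type*} [TopologicalSpace H₁] {J : ModelWithCorners 𝕜 E₁ H₁}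
    {L : Type*} [TopologicalSpace L] [ChartedSpace H₁ L] [Group L]
    (φ : L →* K) {k : L} (hφ₁ : MDifferentiableAt J I φ 1) (hφk : MDifferentiableAt J I φ k)
    (hk : MDifferentiableAt J J (· * k⁻¹) k) (w : E₁) :
    rightTrivialization I (φ k) (mfderiv J I φ k w) =
      mfderiv J I φ 1 (rightTrivialization J k w) := by
  have hcomp : (· * (φ k)⁻¹) ∘ φ = φ ∘ (· * k⁻¹) := by
    funext x; simp
  calc _ = mfderiv J I ((· * (φ k)⁻¹) ∘ φ) k w :=
        (mfderiv_comp_apply k mdifferentiableAt_mul_right hφk w).symm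
    _ = _ := by
      rw [hcomp]
      exact mfderiv_comp_apply_of_eq k hφ₁ hk (mul_inv_cancel k) w

theorem rightTrivialization_mul_mfderiv_mul_right (a b : K) (v : E₀) :
    rightTrivialization I (a * b) (mfderiv I I (· * b) a v) = rightTrivialization I a v := by
  have hcomp : (· * (a * b)⁻¹) ∘ (· * b) = (· * a⁻¹) := by
    funext x; simp [mul_assoc]
  rw [rightTrivialization, rightTrivialization, ← hcomp]
  exact (mfderiv_comp_apply a mdifferentiableAt_mul_right mdifferentiableAt_mul_right v).symm

theorem rightTrivialization_mul_mfderiv_mul_left (a b : K) (v : E₀) :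
    rightTrivialization I (a * b) (mfderiv I I (a * ·) b v) =
      mfderiv I I (fun x => a * x * a⁻¹) 1 (rightTrivialization I b v) := by
  have hcomp : (· * (a * b)⁻¹) ∘ (a * ·) = (fun x => a * x * a⁻¹) ∘ (· * b⁻¹) := by
    funext x; simp [mul_assoc]
  have hconj : MDifferentiableAt I I (fun x : K => a * x * a⁻¹) 1 :=
    mdifferentiableAt_mul_right.comp (I' := I) _ mdifferentiableAt_mul_left
  calc _ = mfderiv I I ((· * (a * b)⁻¹) ∘ (a * ·)) b v :=
        (mfderiv_comp_apply b mdifferentiableAt_mul_right mdifferentiableAt_mul_left v).symm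
    _ = _ := by
      rw [hcomp]
      exact mfderiv_comp_apply_of_eq b hconj mdifferentiableAt_mul_right (mul_inv_cancel b) v

end RightTrivialization

theorem rightTrivialization_mfderiv_mul
    {E₁ : Type*} [NormedAddCommGroup E₁] [NormedSpace ℝ E₁]
    {H₁ : Type*} [TopologicalSpace H₁] {J : ModelWithCorners ℝ E₁ H₁}
    {M : Type*} [TopologicalSpace M] [ChartedSpace H₁ M]
    {f g : M → G} {x : M} (hf : MDifferentiableAt J 𝓘(ℝ, E) f x)
    (hg : MDifferentiableAt J 𝓘(ℝ, E) g x) (v : TangentSpace J x) :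
    rightTrivialization 𝓘(ℝ, E) (f x * g x) (mfderiv J 𝓘(ℝ, E) (fun y => f y * g y) x v) =
      rightTrivialization 𝓘(ℝ, E) (f x) (mfderiv J 𝓘(ℝ, E) f x v) +
        Ad (f x) (rightTrivialization 𝓘(ℝ, E) (g x) (mfderiv J 𝓘(ℝ, E) g x v)) := by
  have hmul : MDifferentiableAt (𝓘(ℝ, E).prod 𝓘(ℝ, E)) 𝓘(ℝ, E)
      (fun p : G × G => p.1 * p.2) (f x, g x) :=
    (contMDiff_mul 𝓘(ℝ, E) 1).mdifferentiableAt one_ne_zero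
  rw [mfderiv_comp_prodMk_apply hmul hf hg]
  exact (map_add _ _ _).trans (congrArg₂ (· + ·)
    (rightTrivialization_mul_mfderiv_mul_right _ _ _)
    (rightTrivialization_mul_mfderiv_mul_left _ _ _))

/-- The paper's `X_λ(h) = dR_{ι_λ(h)⁻¹}(d/dε|_{ε=λ} ι_ε(h))`. -/
noncomputable def rightVariation {M : Type*} (ι : ℝ → M → G) (t : ℝ) (h : M) : E :=
  rightTrivialization 𝓘(ℝ, E) (ι t h) (mfderiv 𝓘(ℝ, ℝ) 𝓘(ℝ, E) (fun ε => ι ε h) t 1)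

theorem rightVariation_add_rightTrivialization_eq
    {E₁ : Type*} [NormedAddCommGroup E₁] [NormedSpace ℝ E₁]
    {H₁ : Type*} [TopologicalSpace H₁] {J : ModelWithCorners ℝ E₁ H₁}
    {M : Type*} [TopologicalSpace M] [ChartedSpace H₁ M]
    {ι : ℝ → M → G} {t : ℝ} {a b : M} {c : ℝ → M}
    (hι : MDifferentiable (𝓘(ℝ, ℝ).prod J) 𝓘(ℝ, E) (fun p : ℝ × M => ι p.1 p.2))
    (hc : MDifferentiableAt 𝓘(ℝ, ℝ) J c t) (hcι : ∀ ε, ι ε (c ε) = ι ε a * ι ε b) :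
    rightVariation ι t (c t) + rightTrivialization 𝓘(ℝ, E) (ι t (c t))
        (mfderiv J 𝓘(ℝ, E) (ι t) (c t) (mfderiv 𝓘(ℝ, ℝ) J c t 1)) =
      rightVariation ι t a + Ad (ι t a) (rightVariation ι t b) := by
  have hcurve (h : M) : MDifferentiableAt 𝓘(ℝ, ℝ) 𝓘(ℝ, E) (fun ε => ι ε h) t :=
    (hι _).comp t (mdifferentiableAt_id.prodMk mdifferentiableAt_const)
  have hsplit := mfderiv_comp_prodMk_apply (Φ := fun p : ℝ × M => ι p.1 p.2) (hι _)
    mdifferentiableAt_id hc 1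
  simp only [mfderiv_id, ContinuousLinearMap.id_apply, id] at hsplit
  calc _ = rightTrivialization 𝓘(ℝ, E) (ι t (c t))
        (mfderiv 𝓘(ℝ, ℝ) 𝓘(ℝ, E) (fun ε => ι ε (c ε)) t 1) := by
        rw [rightVariation, hsplit]
        exact (map_add _ _ _).symm
    _ = rightTrivialization 𝓘(ℝ, E) (ι t a * ι t b)
        (mfderiv 𝓘(ℝ, ℝ) 𝓘(ℝ, E) (fun ε => ι ε a * ι ε b) t 1) := by
        rw [funext hcι, hcι]
    _ = _ := rightTrivialization_mfderiv_mul (hcurve a) (hcurve b) 1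

/-- Here `M` carries the group structure of `H_t`, and `c ε` stands for `m_ε(a, b)`. -/
theorem rightVariation_mul_sub_mem_range
    {E₁ : Type*} [NormedAddCommGroup E₁] [NormedSpace ℝ E₁]
    {H₁ : Type*} [TopologicalSpace H₁] {J : ModelWithCorners ℝ E₁ H₁}
    {M : Type*} [TopologicalSpace M] [ChartedSpace H₁ M] [Group M]
    {ι : ℝ → M → G} {t : ℝ} {a b : M} {c : ℝ → M}
    (hι : MDifferentiable (𝓘(ℝ, ℝ).prod J) 𝓘(ℝ, E) (fun p : ℝ × M => ι p.1 p.2))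
    (hhom : ∀ x y, ι t (x * y) = ι t x * ι t y)
    (hmul_right : MDifferentiableAt J J (· * (a * b)⁻¹) (a * b))
    (hc : MDifferentiableAt 𝓘(ℝ, ℝ) J c t) (hct : c t = a * b)
    (hcι : ∀ ε, ι ε (c ε) = ι ε a * ι ε b) :
    (rightVariation ι t (a * b) - Ad (ι t a) (rightVariation ι t b) - rightVariation ι t a : E) ∈
      Set.range (mfderiv J 𝓘(ℝ, E) (ι t) 1) := by
  rw [← hct] at hmul_right ⊢
  let φ : M →* G := MonoidHom.mk' (ι t) hhom
  have hφ (h : M) : MDifferentiableAt J 𝓘(ℝ, E) φ h :=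
    (hι _).comp h (mdifferentiableAt_const.prodMk mdifferentiableAt_id)
  have htranslate : rightTrivialization 𝓘(ℝ, E) (ι t (c t))
      (mfderiv J 𝓘(ℝ, E) (ι t) (c t) (mfderiv 𝓘(ℝ, ℝ) J c t 1)) =
      mfderiv J 𝓘(ℝ, E) (ι t) 1 (rightTrivialization J (c t) (mfderiv 𝓘(ℝ, ℝ) J c t 1)) :=
    rightTrivialization_mfderiv_monoidHom φ (hφ 1) (hφ (c t)) hmul_right _
  have hdefect : rightVariation ι t (c t) - Ad (ι t a) (rightVariation ι t b) -
      rightVariation ι t a = -rightTrivialization 𝓘(ℝ, E) (ι t (c t))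
        (mfderiv J 𝓘(ℝ, E) (ι t) (c t) (mfderiv 𝓘(ℝ, ℝ) J c t 1)) := by
    linear_combination (norm := module) rightVariation_add_rightTrivialization_eq hι hc hcι
  rw [hdefect, htranslate]
  exact ⟨_, map_neg _ _⟩

theorem subgroup_deformation_cocycle_general
    (m : ℝ → H → H → H) (inv : ℝ → H → H) (e : H)
    (hmsmooth : ContMDiff (𝓘(ℝ, ℝ).prod ((𝓘(ℝ, F)).prod 𝓘(ℝ, F))) 𝓘(ℝ, F) (⊤ : ℕ∞)
      fun p : ℝ × (H × H) => m p.1 p.2.1 p.2.2)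
    (hassoc : ∀ (ε : ℝ) (a b c : H), m ε (m ε a b) c = m ε a (m ε b c))
    (hone : ∀ (ε : ℝ) (a : H), m ε e a = a ∧ m ε a e = a)
    (hinv : ∀ (ε : ℝ) (a : H), m ε (inv ε a) a = e)
    (ι : ℝ → H → G)
    (hιsmooth : ContMDiff (𝓘(ℝ, ℝ).prod 𝓘(ℝ, F)) 𝓘(ℝ, E) (⊤ : ℕ∞)
      fun p : ℝ × H => ι p.1 p.2)
    (hιhom : ∀ (ε : ℝ) (h₁ h₂ : H), ι ε (m ε h₁ h₂) = ι ε h₁ * ι ε h₂)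
    (lam : ℝ) (𝔥 : Submodule ℝ E)
    (h𝔥 : ∀ v : E, v ∈ 𝔥 ↔ ∃ w : F, mfderiv 𝓘(ℝ, F) 𝓘(ℝ, E) (ι lam) e w = v)
    (X : H → E)
    (hX : ∀ h : H, X h =
      mfderiv 𝓘(ℝ, E) 𝓘(ℝ, E) (fun x => x * (ι lam h)⁻¹) (ι lam h)
        (mfderiv 𝓘(ℝ, ℝ) 𝓘(ℝ, E) (fun ε => ι ε h) lam (1 : ℝ))) :
    ∀ h₁ h₂ : H, X (m lam h₁ h₂) - Ad (ι lam h₁) (X h₂) - X h₁ ∈ 𝔥 := by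
  intro h₁ h₂
  let _ : Mul H := ⟨m lam⟩
  let _ : Inv H := ⟨inv lam⟩
  let _ : One H := ⟨e⟩
  let _ : Group H := Group.ofLeftAxioms (hassoc lam) (fun a => (hone lam a).1) (hinv lam)
  have hm := hmsmooth.mdifferentiable (by simp)
  have hmul_right : MDifferentiableAt 𝓘(ℝ, F) 𝓘(ℝ, F) (· * (h₁ * h₂)⁻¹) (h₁ * h₂) :=
    (hm _).comp _ (mdifferentiableAt_const.prodMk
      (mdifferentiableAt_id.prodMk mdifferentiableAt_const))
  have hprod_curve : MDifferentiableAt 𝓘(ℝ, ℝ) 𝓘(ℝ, F) (fun ε => m ε h₁ h₂) lam :=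
    (hm (lam, h₁, h₂)).comp lam (mdifferentiableAt_id.prodMk mdifferentiableAt_const)
  obtain ⟨w, hw⟩ := rightVariation_mul_sub_mem_range (hιsmooth.mdifferentiable (by simp))
    (hιhom lam) hmul_right hprod_curve rfl (hιhom · h₁ h₂)
  rw [show X = rightVariation ι lam from funext hX]
  exact (h𝔥 _).mpr ⟨w, hw⟩

/-- let `(H_ε, ι_ε)` be a smooth deformation of an embedded Lie
subgroup of `G`: a smooth family of Lie group structures `(m_ε, inv_ε, e)` on the
manifold `H` together with a smooth family of embeddings of Lie groups
`ι_ε : H_ε → G`.  Then for each `λ`, the map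
`X̄_λ(h) = dR_{ι_λ(h)⁻¹}(d/dε|_{ε=λ} ι_ε(h)) mod 𝔥_λ` is a 1-cocycle in
`C¹_{ι_λ}(H_λ, 𝔤/𝔥_λ)`, i.e.
`X_λ(m_λ(h₁,h₂)) - Ad_{ι_λ(h₁)}X_λ(h₂) - X_λ(h₁) ∈ 𝔥_λ`, where
`𝔥_λ = dι_λ(T_e H)` is the image of the Lie algebra of `H_λ`. -/
theorem subgroup_deformation_cocycle
    (m : ℝ → H → H → H) (inv : ℝ → H → H) (e : H)
    (hmsmooth : ContMDiff (𝓘(ℝ, ℝ).prod ((𝓘(ℝ, F)).prod 𝓘(ℝ, F))) 𝓘(ℝ, F) (⊤ : ℕ∞)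
      fun p : ℝ × (H × H) => m p.1 p.2.1 p.2.2)
    (hinvsmooth : ContMDiff (𝓘(ℝ, ℝ).prod 𝓘(ℝ, F)) 𝓘(ℝ, F) (⊤ : ℕ∞)
      fun p : ℝ × H => inv p.1 p.2)
    (hassoc : ∀ (ε : ℝ) (a b c : H), m ε (m ε a b) c = m ε a (m ε b c))
    (hone : ∀ (ε : ℝ) (a : H), m ε e a = a ∧ m ε a e = a)
    (hinv : ∀ (ε : ℝ) (a : H), m ε (inv ε a) a = e)
    (ι : ℝ → H → G)
    (hιsmooth : ContMDiff (𝓘(ℝ, ℝ).prod 𝓘(ℝ, F)) 𝓘(ℝ, E) (⊤ : ℕ∞)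
      fun p : ℝ × H => ι p.1 p.2)
    (hιhom : ∀ (ε : ℝ) (h₁ h₂ : H), ι ε (m ε h₁ h₂) = ι ε h₁ * ι ε h₂)
    (hιemb : ∀ ε : ℝ, Topology.IsEmbedding (ι ε))
    (lam : ℝ) (𝔥 : Submodule ℝ E)
    (h𝔥 : ∀ v : E, v ∈ 𝔥 ↔ ∃ w : F, mfderiv 𝓘(ℝ, F) 𝓘(ℝ, E) (ι lam) e w = v)
    (X : H → E)
    (hX : ∀ h : H, X h =
      mfderiv 𝓘(ℝ, E) 𝓘(ℝ, E) (fun x => x * (ι lam h)⁻¹) (ι lam h)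
        (mfderiv 𝓘(ℝ, ℝ) 𝓘(ℝ, E) (fun ε => ι ε h) lam (1 : ℝ))) :
    ∀ h₁ h₂ : H, X (m lam h₁ h₂) - Ad (ι lam h₁) (X h₂) - X h₁ ∈ 𝔥 :=
  subgroup_deformation_cocycle_general m inv e hmsmooth hassoc hone hinv ι hιsmooth hιhom lam 𝔥 h𝔥 X
    hX
end

section
/- Let ι: H ↪ G be an embedded Lie subgroup and (H_ε, ι_ε), (H'_ε, ι'_ε) two equivalent deformations, i.e. ι_ε ∘ F_ε = I_{g_ε} ∘ ι'_ε for a smooth family of isomorphisms F_ε: H'_ε → H_ε with F₀ = Id and a smooth curve g_ε in G with g₀ = 1. Then the degree-0 deformation classes agree: \bar{X}'₀ - \bar{X}₀ = \bar{δ}_ι(\bar{u}₀) in C¹_ι(H, 𝔤/𝔥), where u₀ = d/dε|_{ε=0} g_ε and \bar{δ}_ι(\bar{u})(h) = (Ad_{ι(h)}u - u) mod 𝔥. Hence [\bar{X}₀] = [\bar{X}'₀] ∈ H¹_ι(H, 𝔤/𝔥). -/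
/-!
Apply the right logarithmic derivative `δc = dR_{c⁻¹} ċ` at `ε = 0` to both sides of
`ι_ε (F_ε h) = g_ε ι'_ε(h) g_ε⁻¹`. Since `δ(ab) = δa + Ad_a δb` and `g₀ = 1`, the right side gives
`u₀ + X'(h) - Ad_{ι₀(h)} u₀`. The left side gives `X(h)` plus `dR_{ι₀(h)⁻¹} dι₀(Ḟ₀ h)`, and this
lies in `𝔥 = dι₀(T_e H)` because `ι₀` is a homomorphism: `R_{ι₀(h)⁻¹} ∘ ι₀ = ι₀ ∘ R_{h⁻¹}`, and
`R_{h⁻¹}` sends `h` to `e`.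
-/

open Manifold

variable {E F : Type*} [NormedAddCommGroup E] [NormedSpace ℝ E]
  [NormedAddCommGroup F] [NormedSpace ℝ F]
  {G : Type*} [TopologicalSpace G] [ChartedSpace E G] [Group G] [LieGroup 𝓘(ℝ, E) (⊤ : ℕ∞) G]
  {H : Type*} [TopologicalSpace H] [ChartedSpace F H]
  [IsManifold 𝓘(ℝ, F) (⊤ : ℕ∞) H]

section ChainRule

variable {𝕜 : Type*} [NontriviallyNormedField 𝕜]
  {E₁ E₂ E₃ E₄ : Type*} [NormedAddCommGroup E₁] [NormedSpace 𝕜 E₁]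
  [NormedAddCommGroup E₂] [NormedSpace 𝕜 E₂] [NormedAddCommGroup E₃] [NormedSpace 𝕜 E₃]
  [NormedAddCommGroup E₄] [NormedSpace 𝕜 E₄]
  {H₁ H₂ H₃ H₄ : Type*} [TopologicalSpace H₁] [TopologicalSpace H₂] [TopologicalSpace H₃]
  [TopologicalSpace H₄]
  {I₁ : ModelWithCorners 𝕜 E₁ H₁} {I₂ : ModelWithCorners 𝕜 E₂ H₂}
  {I₃ : ModelWithCorners 𝕜 E₃ H₃} {I₄ : ModelWithCorners 𝕜 E₄ H₄}
  {M N N' P : Type*} [TopologicalSpace M] [ChartedSpace H₁ M] [TopologicalSpace N]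
  [ChartedSpace H₂ N] [TopologicalSpace N'] [ChartedSpace H₃ N'] [TopologicalSpace P]
  [ChartedSpace H₄ P]

theorem mfderiv_apply_eq_of_comp_eq {f₁ : N → P} {f₂ : M → N} {g₁ : N' → P} {g₂ : M → N'}
    {x : M} {y : N'} (hcomm : f₁ ∘ f₂ = g₁ ∘ g₂) (hy : g₂ x = y)
    (hf₁ : MDifferentiableAt I₂ I₄ f₁ (f₂ x)) (hf₂ : MDifferentiableAt I₁ I₂ f₂ x)
    (hg₁ : MDifferentiableAt I₃ I₄ g₁ y) (hg₂ : MDifferentiableAt I₁ I₃ g₂ x)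
    (v : TangentSpace I₁ x) :
    mfderiv I₂ I₄ f₁ (f₂ x) (mfderiv I₁ I₂ f₂ x v) = mfderiv I₃ I₄ g₁ y (mfderiv I₁ I₃ g₂ x v) := by
  rw [← mfderiv_comp_apply_of_eq x hg₁ hg₂ hy, ← mfderiv_comp_apply x hf₁ hf₂, hcomm]

theorem mfderiv_apply_curve {f : 𝕜 → M → N} {y : 𝕜 → M} {t : 𝕜} {x : M}
    (hf : MDifferentiableAt (𝓘(𝕜, 𝕜).prod I₁) I₂ (fun p : 𝕜 × M => f p.1 p.2) (t, x))
    (hy : MDifferentiableAt 𝓘(𝕜, 𝕜) I₁ y t) (hyx : y t = x) :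
    mfderiv 𝓘(𝕜, 𝕜) I₂ (fun s => f s (y s)) t (1 : 𝕜) =
      mfderiv 𝓘(𝕜, 𝕜) I₂ (fun s => f s x) t (1 : 𝕜) +
      mfderiv I₁ I₂ (f t) x (mfderiv 𝓘(𝕜, 𝕜) I₁ y t (1 : 𝕜)) := by
  subst hyx
  have hpair : (fun s => f s (y s)) = (fun p : 𝕜 × M => f p.1 p.2) ∘ fun s => (s, y s) := rfl
  have hcurve : MDifferentiableAt 𝓘(𝕜, 𝕜) (𝓘(𝕜, 𝕜).prod I₁) (fun s => (s, y s)) t :=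
    mdifferentiableAt_id.prodMk hy
  have hcurve' : mfderiv 𝓘(𝕜, 𝕜) (𝓘(𝕜, 𝕜).prod I₁) (fun s => (s, y s)) t =
      (mfderiv 𝓘(𝕜, 𝕜) 𝓘(𝕜, 𝕜) id t).prod (mfderiv 𝓘(𝕜, 𝕜) I₁ y t) :=
    mdifferentiableAt_id.mfderiv_prod hy
  rw [hpair, mfderiv_comp t hf hcurve, hcurve', mfderiv_id]
  exact mfderiv_prod_eq_add_apply hf

end ChainRule

theorem Ad_one : (Ad (1 : G) : E →L[ℝ] E) = ContinuousLinearMap.id ℝ E := by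
  have hid : (fun x : G => 1 * x * 1⁻¹) = id := by ext; simp
  rw [Ad, hid, mfderiv_id]
  rfl

theorem mfderiv_curve_mul {a b : ℝ → G} {t : ℝ}
    (ha : MDifferentiableAt 𝓘(ℝ, ℝ) 𝓘(ℝ, E) a t) (hb : MDifferentiableAt 𝓘(ℝ, ℝ) 𝓘(ℝ, E) b t) :
    mfderiv 𝓘(ℝ, ℝ) 𝓘(ℝ, E) (fun s => a s * b s) t (1 : ℝ) =
      mfderiv 𝓘(ℝ, E) 𝓘(ℝ, E) (fun x => x * b t) (a t) (mfderiv 𝓘(ℝ, ℝ) 𝓘(ℝ, E) a t (1 : ℝ)) +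
      mfderiv 𝓘(ℝ, E) 𝓘(ℝ, E) (fun x => a t * x) (b t) (mfderiv 𝓘(ℝ, ℝ) 𝓘(ℝ, E) b t (1 : ℝ)) := by
  have hmul : MDifferentiableAt (𝓘(ℝ, E).prod 𝓘(ℝ, E)) 𝓘(ℝ, E)
      (fun p : G × G => p.1 * p.2) (a t, b t) :=
    (contMDiff_mul 𝓘(ℝ, E) 1).mdifferentiableAt one_ne_zero
  have hpair : (fun s => a s * b s) = (fun p : G × G => p.1 * p.2) ∘ fun s => (a s, b s) := rfl
  rw [hpair, mfderiv_comp t hmul (ha.prodMk hb), ha.mfderiv_prod hb]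
  exact mfderiv_prod_eq_add_apply hmul

variable (E) in
/-- The deformation cocycles of the statement are `X h = rightLogDeriv E (fun ε => ι ε h) 0`. -/
noncomputable def rightLogDeriv (c : ℝ → G) (t : ℝ) : E :=
  mfderiv 𝓘(ℝ, E) 𝓘(ℝ, E) (fun x : G => x * (c t)⁻¹) (c t) (mfderiv 𝓘(ℝ, ℝ) 𝓘(ℝ, E) c t (1 : ℝ))

theorem rightLogDeriv_of_eq_one {c : ℝ → G} {t : ℝ} (hc : c t = 1) :
    rightLogDeriv E c t = mfderiv 𝓘(ℝ, ℝ) 𝓘(ℝ, E) c t (1 : ℝ) := by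
  have hR_one : ∀ p : G, p = 1 → ∀ v : TangentSpace 𝓘(ℝ, E) p,
      mfderiv 𝓘(ℝ, E) 𝓘(ℝ, E) (fun x : G => x * p⁻¹) p v = v := by
    rintro p rfl v
    have hid : (fun x : G => x * 1⁻¹) = id := by ext; simp
    rw [hid, mfderiv_id]
    rfl
  exact hR_one _ hc _

theorem rightLogDeriv_mul {a b : ℝ → G} {t : ℝ}
    (ha : MDifferentiableAt 𝓘(ℝ, ℝ) 𝓘(ℝ, E) a t) (hb : MDifferentiableAt 𝓘(ℝ, ℝ) 𝓘(ℝ, E) b t) :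
    rightLogDeriv E (fun s => a s * b s) t =
      rightLogDeriv E a t + Ad (a t) (rightLogDeriv E b t) := by
  have hR : mfderiv 𝓘(ℝ, E) 𝓘(ℝ, E) (fun x => x * (a t * b t)⁻¹) (a t * b t)
      (mfderiv 𝓘(ℝ, E) 𝓘(ℝ, E) (fun x => x * b t) (a t) (mfderiv 𝓘(ℝ, ℝ) 𝓘(ℝ, E) a t (1 : ℝ))) =
      rightLogDeriv E a t := by
    have hcomm : (fun x => x * (a t * b t)⁻¹) ∘ (fun x => x * b t) = fun x => x * (a t)⁻¹ := by
      ext; simp [mul_assoc]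
    rw [← mfderiv_comp_apply (a t) mdifferentiableAt_mul_right mdifferentiableAt_mul_right, hcomm]
    rfl
  have hL : mfderiv 𝓘(ℝ, E) 𝓘(ℝ, E) (fun x => x * (a t * b t)⁻¹) (a t * b t)
      (mfderiv 𝓘(ℝ, E) 𝓘(ℝ, E) (fun x => a t * x) (b t) (mfderiv 𝓘(ℝ, ℝ) 𝓘(ℝ, E) b t (1 : ℝ))) =
      Ad (a t) (rightLogDeriv E b t) :=
    mfderiv_apply_eq_of_comp_eq (g₁ := fun x => a t * x * (a t)⁻¹) (g₂ := fun x => x * (b t)⁻¹)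
      (by ext; simp [mul_assoc]) (mul_inv_cancel (b t)) mdifferentiableAt_mul_right
      mdifferentiableAt_mul_left (mdifferentiableAt_mul_right.comp _ mdifferentiableAt_mul_left)
      mdifferentiableAt_mul_right _
  rw [rightLogDeriv, mfderiv_curve_mul ha hb, map_add, hR, hL]
  rfl

theorem rightLogDeriv_const (p : G) (t : ℝ) : rightLogDeriv E (fun _ => p) t = 0 := by
  rw [rightLogDeriv, mfderiv_const]
  exact map_zero _

theorem rightLogDeriv_inv_of_eq_one {a : ℝ → G} {t : ℝ}
    (ha : MDifferentiableAt 𝓘(ℝ, ℝ) 𝓘(ℝ, E) a t) (ha₁ : a t = 1) :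
    rightLogDeriv E (fun s => (a s)⁻¹) t = -rightLogDeriv E a t := by
  have ha' : MDifferentiableAt 𝓘(ℝ, ℝ) 𝓘(ℝ, E) (fun s => (a s)⁻¹) t :=
    ((contMDiff_inv 𝓘(ℝ, E) 1).mdifferentiableAt one_ne_zero).comp t ha
  have hsum := rightLogDeriv_mul ha ha'
  simp only [mul_inv_cancel, rightLogDeriv_const, ha₁, Ad_one] at hsum
  exact eq_neg_of_add_eq_zero_right hsum.symm

theorem rightLogDeriv_conj_of_eq_one {g c : ℝ → G} {t : ℝ}
    (hg : MDifferentiableAt 𝓘(ℝ, ℝ) 𝓘(ℝ, E) g t) (hc : MDifferentiableAt 𝓘(ℝ, ℝ) 𝓘(ℝ, E) c t)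
    (hg₁ : g t = 1) :
    rightLogDeriv E (fun s => g s * c s * (g s)⁻¹) t =
      rightLogDeriv E g t + rightLogDeriv E c t - Ad (c t) (rightLogDeriv E g t) := by
  have hgc : MDifferentiableAt 𝓘(ℝ, ℝ) 𝓘(ℝ, E) (fun s => g s * c s) t :=
    ((contMDiff_mul 𝓘(ℝ, E) 1).mdifferentiableAt one_ne_zero).comp t (hg.prodMk hc)
  have hg' : MDifferentiableAt 𝓘(ℝ, ℝ) 𝓘(ℝ, E) (fun s => (g s)⁻¹) t :=
    ((contMDiff_inv 𝓘(ℝ, E) 1).mdifferentiableAt one_ne_zero).comp t hg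
  rw [rightLogDeriv_mul hgc hg', rightLogDeriv_mul hg hc, rightLogDeriv_inv_of_eq_one hg hg₁,
    hg₁, one_mul, Ad_one, map_neg, ContinuousLinearMap.id_apply, sub_eq_add_neg]

section Subgroup

variable {M : Type*} [TopologicalSpace M] [ChartedSpace F M]

theorem rightLogDeriv_apply_curve_sub {f : ℝ → M → G} {y : ℝ → M} {t : ℝ} {x : M}
    (hf : MDifferentiableAt (𝓘(ℝ, ℝ).prod 𝓘(ℝ, F)) 𝓘(ℝ, E) (fun p : ℝ × M => f p.1 p.2) (t, x))
    (hy : MDifferentiableAt 𝓘(ℝ, ℝ) 𝓘(ℝ, F) y t) (hyx : y t = x) :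
    rightLogDeriv E (fun s => f s (y s)) t - rightLogDeriv E (fun s => f s x) t =
      mfderiv 𝓘(ℝ, E) 𝓘(ℝ, E) (fun z : G => z * (f t x)⁻¹) (f t x)
        (mfderiv 𝓘(ℝ, F) 𝓘(ℝ, E) (f t) x (mfderiv 𝓘(ℝ, ℝ) 𝓘(ℝ, F) y t (1 : ℝ))) := by
  subst hyx
  have h := congrArg (mfderiv 𝓘(ℝ, E) 𝓘(ℝ, E) (fun z : G => z * (f t (y t))⁻¹) (f t (y t)))
    (mfderiv_apply_curve hf hy rfl)
  rw [map_add] at h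
  exact sub_eq_of_eq_add' h

theorem mfderiv_mul_right_inv_apply_mfderiv_of_map_mul {mul : M → M → M} {inv : M → M} {e : M}
    {φ : M → G}
    (hassoc : ∀ a b c, mul (mul a b) c = mul a (mul b c)) (hone : ∀ a, mul e a = a)
    (hinv : ∀ a, mul (inv a) a = e) (hφ : ∀ a b, φ (mul a b) = φ a * φ b)
    (hφd : MDifferentiable 𝓘(ℝ, F) 𝓘(ℝ, E) φ) {x : M}
    (hmul : MDifferentiableAt 𝓘(ℝ, F) 𝓘(ℝ, F) (fun z => mul z (inv x)) x) (v : F) :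
    mfderiv 𝓘(ℝ, E) 𝓘(ℝ, E) (fun z : G => z * (φ x)⁻¹) (φ x) (mfderiv 𝓘(ℝ, F) 𝓘(ℝ, E) φ x v) =
      mfderiv 𝓘(ℝ, F) 𝓘(ℝ, E) φ e (mfderiv 𝓘(ℝ, F) 𝓘(ℝ, F) (fun z => mul z (inv x)) x v) := by
  let _ : Mul M := ⟨mul⟩
  let _ : Inv M := ⟨inv⟩
  let _ : One M := ⟨e⟩
  let _ : Group M := Group.ofLeftAxioms hassoc hone hinv
  let φ' : M →* G := MonoidHom.mk' φ hφ
  refine mfderiv_apply_eq_of_comp_eq (f₁ := fun z : G => z * (φ x)⁻¹)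
    (g₂ := fun z => mul z (inv x)) ?_ (mul_inv_cancel x) mdifferentiableAt_mul_right (hφd x)
    (hφd e) hmul v
  ext z
  exact (map_mul_inv φ' z x).symm

end Subgroup

theorem equivalent_subgroup_deformations_cohomologous_general
    (m : ℝ → H → H → H) (inv : ℝ → H → H) (e : H)
    (hmsmooth : ContMDiff (𝓘(ℝ, ℝ).prod ((𝓘(ℝ, F)).prod 𝓘(ℝ, F))) 𝓘(ℝ, F) (⊤ : ℕ∞)
      fun p : ℝ × (H × H) => m p.1 p.2.1 p.2.2)
    (hassoc : ∀ (ε : ℝ) (a b c : H), m ε (m ε a b) c = m ε a (m ε b c))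
    (hone : ∀ (ε : ℝ) (a : H), m ε e a = a ∧ m ε a e = a)
    (hinv : ∀ (ε : ℝ) (a : H), m ε (inv ε a) a = e)
    (ι ι' : ℝ → H → G)
    (hιsmooth : ContMDiff (𝓘(ℝ, ℝ).prod 𝓘(ℝ, F)) 𝓘(ℝ, E) (⊤ : ℕ∞)
      fun p : ℝ × H => ι p.1 p.2)
    (hιsmooth' : ContMDiff (𝓘(ℝ, ℝ).prod 𝓘(ℝ, F)) 𝓘(ℝ, E) (⊤ : ℕ∞)
      fun p : ℝ × H => ι' p.1 p.2)
    (hιhom : ∀ (ε : ℝ) (h₁ h₂ : H), ι ε (m ε h₁ h₂) = ι ε h₁ * ι ε h₂)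
    (hι0 : ι 0 = ι' 0)
    (Fam : ℝ → H → H)
    (hFamsmooth : ContMDiff (𝓘(ℝ, ℝ).prod 𝓘(ℝ, F)) 𝓘(ℝ, F) (⊤ : ℕ∞)
      fun p : ℝ × H => Fam p.1 p.2)
    (hFam0 : ∀ h : H, Fam 0 h = h)
    (g : ℝ → G) (hg : ContMDiff 𝓘(ℝ, ℝ) 𝓘(ℝ, E) (⊤ : ℕ∞) g) (hg0 : g 0 = 1)
    (hequiv : ∀ (ε : ℝ) (h : H), ι ε (Fam ε h) = g ε * ι' ε h * (g ε)⁻¹)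
    (u₀ : E) (hu₀ : u₀ = mfderiv 𝓘(ℝ, ℝ) 𝓘(ℝ, E) g 0 (1 : ℝ))
    (𝔥 : Submodule ℝ E)
    (h𝔥 : ∀ v : E, v ∈ 𝔥 ↔ ∃ w : F, mfderiv 𝓘(ℝ, F) 𝓘(ℝ, E) (ι 0) e w = v)
    (X X' : H → E)
    (hX : ∀ h : H, X h =
      mfderiv 𝓘(ℝ, E) 𝓘(ℝ, E) (fun x => x * (ι 0 h)⁻¹) (ι 0 h)
        (mfderiv 𝓘(ℝ, ℝ) 𝓘(ℝ, E) (fun ε => ι ε h) 0 (1 : ℝ)))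
    (hX' : ∀ h : H, X' h =
      mfderiv 𝓘(ℝ, E) 𝓘(ℝ, E) (fun x => x * (ι' 0 h)⁻¹) (ι' 0 h)
        (mfderiv 𝓘(ℝ, ℝ) 𝓘(ℝ, E) (fun ε => ι' ε h) 0 (1 : ℝ))) :
    ∀ h : H, X' h - X h - (Ad (ι 0 h) u₀ - u₀) ∈ 𝔥 := by
  intro h
  have hgd : MDifferentiableAt 𝓘(ℝ, ℝ) 𝓘(ℝ, E) g 0 := hg.mdifferentiableAt (by simp)
  have hι'd : MDifferentiableAt 𝓘(ℝ, ℝ) 𝓘(ℝ, E) (fun ε => ι' ε h) 0 :=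
    (hιsmooth'.comp (contMDiff_id.prodMk contMDiff_const)).mdifferentiableAt (by simp)
  have hFd : MDifferentiableAt 𝓘(ℝ, ℝ) 𝓘(ℝ, F) (fun ε => Fam ε h) 0 :=
    (hFamsmooth.comp (contMDiff_id.prodMk contMDiff_const)).mdifferentiableAt (by simp)
  have hι₀d : MDifferentiable 𝓘(ℝ, F) 𝓘(ℝ, E) (ι 0) :=
    (hιsmooth.comp (contMDiff_const.prodMk contMDiff_id)).mdifferentiable (by simp)
  have hρd : MDifferentiableAt 𝓘(ℝ, F) 𝓘(ℝ, F) (fun x => m 0 x (inv 0 h)) h :=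
    (hmsmooth.comp (contMDiff_const.prodMk (contMDiff_id.prodMk contMDiff_const))).mdifferentiableAt
      (by simp)
  have hleft := (rightLogDeriv_apply_curve_sub (hιsmooth.mdifferentiableAt (by simp)) hFd
    (hFam0 h)).trans (mfderiv_mul_right_inv_apply_mfderiv_of_map_mul (hassoc 0)
      (fun a => (hone 0 a).1) (hinv 0) (hιhom 0) hι₀d hρd _)
  have hright := rightLogDeriv_conj_of_eq_one hgd hι'd hg0
  rw [rightLogDeriv_of_eq_one hg0, ← hu₀] at hright
  rw [funext (hequiv · h), hright] at hleft
  have hXh : X h = rightLogDeriv E (fun ε => ι ε h) 0 := hX h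
  have hX'h : X' h = rightLogDeriv E (fun ε => ι' ε h) 0 := hX' h
  rw [h𝔥]
  refine ⟨_, hleft.symm.trans ?_⟩
  rw [hXh, hX'h, hι0]
  abel

/-- if `(H_ε, ι_ε)` and `(H'_ε, ι'_ε)` are equivalent smooth
deformations of an embedded Lie subgroup `ι₀ : H ↪ G`, i.e.
`ι_ε ∘ F_ε = I_{g_ε} ∘ ι'_ε` for a smooth family of Lie group isomorphisms
`F_ε : H'_ε → H_ε` with `F₀ = Id` and a smooth curve `g_ε` with `g₀ = 1`, then
the deformation classes at time `0` agree:
`X̄'₀ - X̄₀ = δ̄_ι(ū₀)` in `C¹_ι(H, 𝔤/𝔥)`, i.e.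
`X'₀(h) - X₀(h) - (Ad_{ι₀(h)}u₀ - u₀) ∈ 𝔥` where `u₀ = d/dε|₀ g_ε`.
Hence `[X̄₀] = [X̄'₀] ∈ H¹_ι(H, 𝔤/𝔥)`. -/
theorem equivalent_subgroup_deformations_cohomologous
    (m m' : ℝ → H → H → H) (inv inv' : ℝ → H → H) (e : H)
    (hmsmooth : ContMDiff (𝓘(ℝ, ℝ).prod ((𝓘(ℝ, F)).prod 𝓘(ℝ, F))) 𝓘(ℝ, F) (⊤ : ℕ∞)
      fun p : ℝ × (H × H) => m p.1 p.2.1 p.2.2)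
    (hmsmooth' : ContMDiff (𝓘(ℝ, ℝ).prod ((𝓘(ℝ, F)).prod 𝓘(ℝ, F))) 𝓘(ℝ, F) (⊤ : ℕ∞)
      fun p : ℝ × (H × H) => m' p.1 p.2.1 p.2.2)
    (hassoc : ∀ (ε : ℝ) (a b c : H), m ε (m ε a b) c = m ε a (m ε b c))
    (hassoc' : ∀ (ε : ℝ) (a b c : H), m' ε (m' ε a b) c = m' ε a (m' ε b c))
    (hone : ∀ (ε : ℝ) (a : H), m ε e a = a ∧ m ε a e = a)
    (hone' : ∀ (ε : ℝ) (a : H), m' ε e a = a ∧ m' ε a e = a)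
    (hinv : ∀ (ε : ℝ) (a : H), m ε (inv ε a) a = e)
    (hinv' : ∀ (ε : ℝ) (a : H), m' ε (inv' ε a) a = e)
    (hm0 : m 0 = m' 0)
    (ι ι' : ℝ → H → G)
    (hιsmooth : ContMDiff (𝓘(ℝ, ℝ).prod 𝓘(ℝ, F)) 𝓘(ℝ, E) (⊤ : ℕ∞)
      fun p : ℝ × H => ι p.1 p.2)
    (hιsmooth' : ContMDiff (𝓘(ℝ, ℝ).prod 𝓘(ℝ, F)) 𝓘(ℝ, E) (⊤ : ℕ∞)
      fun p : ℝ × H => ι' p.1 p.2)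
    (hιhom : ∀ (ε : ℝ) (h₁ h₂ : H), ι ε (m ε h₁ h₂) = ι ε h₁ * ι ε h₂)
    (hιhom' : ∀ (ε : ℝ) (h₁ h₂ : H), ι' ε (m' ε h₁ h₂) = ι' ε h₁ * ι' ε h₂)
    (hιemb : ∀ ε : ℝ, Topology.IsEmbedding (ι ε))
    (hιemb' : ∀ ε : ℝ, Topology.IsEmbedding (ι' ε))
    (hι0 : ι 0 = ι' 0)
    (Fam : ℝ → H → H)
    (hFamsmooth : ContMDiff (𝓘(ℝ, ℝ).prod 𝓘(ℝ, F)) 𝓘(ℝ, F) (⊤ : ℕ∞)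
      fun p : ℝ × H => Fam p.1 p.2)
    (hFamiso : ∀ ε : ℝ, Function.Bijective (Fam ε))
    (hFamhom : ∀ (ε : ℝ) (a b : H), Fam ε (m' ε a b) = m ε (Fam ε a) (Fam ε b))
    (hFam0 : ∀ h : H, Fam 0 h = h)
    (g : ℝ → G) (hg : ContMDiff 𝓘(ℝ, ℝ) 𝓘(ℝ, E) (⊤ : ℕ∞) g) (hg0 : g 0 = 1)
    (hequiv : ∀ (ε : ℝ) (h : H), ι ε (Fam ε h) = g ε * ι' ε h * (g ε)⁻¹)
    (u₀ : E) (hu₀ : u₀ = mfderiv 𝓘(ℝ, ℝ) 𝓘(ℝ, E) g 0 (1 : ℝ))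
    (𝔥 : Submodule ℝ E)
    (h𝔥 : ∀ v : E, v ∈ 𝔥 ↔ ∃ w : F, mfderiv 𝓘(ℝ, F) 𝓘(ℝ, E) (ι 0) e w = v)
    (X X' : H → E)
    (hX : ∀ h : H, X h =
      mfderiv 𝓘(ℝ, E) 𝓘(ℝ, E) (fun x => x * (ι 0 h)⁻¹) (ι 0 h)
        (mfderiv 𝓘(ℝ, ℝ) 𝓘(ℝ, E) (fun ε => ι ε h) 0 (1 : ℝ)))
    (hX' : ∀ h : H, X' h =
      mfderiv 𝓘(ℝ, E) 𝓘(ℝ, E) (fun x => x * (ι' 0 h)⁻¹) (ι' 0 h)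
        (mfderiv 𝓘(ℝ, ℝ) 𝓘(ℝ, E) (fun ε => ι' ε h) 0 (1 : ℝ))) :
    ∀ h : H, X' h - X h - (Ad (ι 0 h) u₀ - u₀) ∈ 𝔥 :=
  equivalent_subgroup_deformations_cohomologous_general m inv e hmsmooth hassoc hone hinv ι ι'
    hιsmooth hιsmooth' hιhom hι0 Fam hFamsmooth hFam0 g hg hg0 hequiv u₀ hu₀ 𝔥 h𝔥 X X' hX hX'
end
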